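/- arXiv:1307.4794 — 3 statements merged into one kernel-verified Lean document; each statement's English description precedes it below -/
import Mathlib

section
/- Let $G$ be a group acting by homeomorphisms on a compact Hausdorff space $X$ and let $p \in X$. Then $\overline{G \cdot p}$ is a minimal closed $G$-invariant set if and only if for every open $U \subseteq X$ containing $p$, the return set $N(p, U) = \{g \in G : g \cdot p \in U\}$ is syndetic, i.e. there exist finitely many $g_1, \dots, g_n \in G$ with $G = \bigcup_{i=1}^n g_i \cdot N(p,U)$. -/
/-!
If the orbit closure `Y` of `p` is minimal and `U` is an open neighbourhood of `p`, the points of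
`Y` whose orbit avoids `U` form a closed invariant proper subset of `Y`, hence there are none: the
translates `g • U` cover `Y`, and by compactness finitely many of them do, which is syndeticity of
the return set. Conversely, if a closed invariant `N ⊆ Y` missed `p`, separate `p ∈ U` from
`N ⊆ V`; the orbit lies in finitely many translates `h • U`, so the open set `⋂ h • V`, which
meets `N`, misses the orbit and hence `Y`.
-/

open MulAction Set
open scoped Pointwise

def IsMinimalSet (G : Type*) {X : Type*} [Group G] [TopologicalSpace X] [MulAction G X]
    (Y : Set X) : Prop :=
  (∀ g : G, ∀ x ∈ Y, g • x ∈ Y) ∧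
    ∀ N ⊆ Y, N.Nonempty → IsClosed N → (∀ g : G, ∀ x ∈ N, g • x ∈ N) → N = Y

section

variable {G X : Type*} [Group G] [MulAction G X]

theorem forall_exists_mul_and_smul_mem_iff_orbit_subset {p : X} {U : Set X} {F : Finset G} :
    (∀ g : G, ∃ h ∈ F, ∃ k : G, k • p ∈ U ∧ g = h * k) ↔ orbit G p ⊆ ⋃ h ∈ F, h • U := by
  simp only [subset_def, mem_orbit_iff, forall_exists_index, forall_apply_eq_imp_iff, mem_iUnion,
    mem_smul_set_iff_inv_smul_mem, exists_prop, smul_smul]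
  refine forall_congr' fun g => exists_congr fun h => and_congr_right fun _ => ⟨?_, ?_⟩
  · rintro ⟨k, hk, rfl⟩
    simpa using hk
  · exact fun hg => ⟨h⁻¹ * g, hg, by group⟩

theorem disjoint_biInter_smul_biUnion_smul {F : Finset G} {U V : Set X} (hVU : Disjoint V U) :
    Disjoint (⋂ h ∈ F, h • V) (⋃ h ∈ F, h • U) :=
  disjoint_iUnion₂_right.2 fun h hh => (disjoint_smul_set.2 hVU).mono_left (iInter₂_subset h hh)

variable [TopologicalSpace X] [ContinuousConstSMul G X]

theorem IsMinimalSet.subset_iUnion_smul {Y U : Set X} (hY : IsMinimalSet G Y) (hYc : IsClosed Y)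
    (hU : IsOpen U) (hUY : (U ∩ Y).Nonempty) : Y ⊆ ⋃ g : G, g • U := by
  intro x hx
  by_contra hxU
  set W := Y \ ⋃ g : G, g • U
  have hWc : IsClosed W := hYc.sdiff (isOpen_iUnion fun g => hU.smul g)
  have hWinv : ∀ g : G, ∀ y ∈ W, g • y ∈ W := by
    rintro g y ⟨hyY, hyU⟩
    refine ⟨hY.1 g y hyY, fun hgy => hyU ?_⟩
    obtain ⟨h, hh⟩ := mem_iUnion.1 hgy
    exact mem_iUnion.2 ⟨g⁻¹ * h, by simpa [mem_smul_set_iff_inv_smul_mem, mul_smul] using hh⟩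
  have hWY : W = Y := hY.2 W sdiff_subset ⟨x, hx, hxU⟩ hWc hWinv
  obtain ⟨y, hyU, hyY⟩ := hUY
  exact (hWY ▸ hyY).2 (mem_iUnion.2 ⟨1, by simpa using hyU⟩)

theorem IsMinimalSet.exists_finset_subset_biUnion_smul [CompactSpace X] {Y U : Set X}
    (hY : IsMinimalSet G Y) (hYc : IsClosed Y) (hU : IsOpen U) (hUY : (U ∩ Y).Nonempty) :
    ∃ F : Finset G, Y ⊆ ⋃ h ∈ F, h • U :=
  hYc.isCompact.elim_finite_subcover (fun g : G => g • U) (fun g => hU.smul g)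
    (hY.subset_iUnion_smul hYc hU hUY)

theorem mem_of_forall_orbit_subset_biUnion_smul [RegularSpace X] {p : X}
    (hsynd : ∀ U : Set X, IsOpen U → p ∈ U → ∃ F : Finset G, orbit G p ⊆ ⋃ h ∈ F, h • U)
    {N : Set X} (hNY : N ⊆ closure (orbit G p)) (hN : N.Nonempty) (hNc : IsClosed N)
    (hNinv : ∀ g : G, ∀ x ∈ N, g • x ∈ N) : p ∈ N := by
  by_contra hpN
  obtain ⟨U, V, hU, hV, hpU, hNV, hUV⟩ :=
    SeparatedNhds.of_isCompact_isClosed isCompact_singleton hNc (disjoint_singleton_left.2 hpN)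
  obtain ⟨F, hF⟩ := hsynd U hU (hpU rfl)
  obtain ⟨q, hq⟩ := hN
  have hqO : q ∈ ⋂ h ∈ F, h • V :=
    mem_iInter₂.2 fun h _ => mem_smul_set_iff_inv_smul_mem.2 (hNV (hNinv _ q hq))
  have hO : Disjoint (⋂ h ∈ F, h • V) (closure (orbit G p)) :=
    ((disjoint_biInter_smul_biUnion_smul hUV.symm).mono_right hF).closure_right
      (isOpen_biInter_finset fun h _ => hV.smul h)
  exact hO.ne_of_mem hqO (hNY hq) rfl

theorem isMinimalSet_closure_orbit_of_forall_orbit_subset_biUnion_smul [RegularSpace X] {p : X}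
    (hsynd : ∀ U : Set X, IsOpen U → p ∈ U → ∃ F : Finset G, orbit G p ⊆ ⋃ h ∈ F, h • U) :
    IsMinimalSet G (closure (orbit G p)) := by
  refine ⟨fun g x hx => smul_closure_orbit_subset g p (smul_mem_smul_set hx),
    fun N hNY hN hNc hNinv => hNY.antisymm (closure_minimal ?_ hNc)⟩
  rintro _ ⟨g, rfl⟩
  exact hNinv g p (mem_of_forall_orbit_subset_biUnion_smul hsynd hNY hN hNc hNinv)

end

theorem almost_periodic_iff_syndetic_return {G X : Type*} [Group G] [TopologicalSpace X]
    [CompactSpace X] [T2Space X] [MulAction G X]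
    (hcont : ∀ g : G, Continuous (fun x : X => g • x))
    (p : X) :
    ((∀ g : G, ∀ x ∈ closure (MulAction.orbit G p),
        g • x ∈ closure (MulAction.orbit G p)) ∧
      ∀ N ⊆ closure (MulAction.orbit G p), N.Nonempty → IsClosed N →
        (∀ g : G, ∀ x ∈ N, g • x ∈ N) → N = closure (MulAction.orbit G p)) ↔
    (∀ U : Set X, IsOpen U → p ∈ U →
      ∃ F : Finset G, ∀ g : G, ∃ h ∈ F, ∃ k : G, k • p ∈ U ∧ g = h * k) := by
  have : ContinuousConstSMul G X := ⟨hcont⟩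
  simp only [forall_exists_mul_and_smul_mem_iff_orbit_subset]
  refine ⟨fun hmin U hU hpU => ?_, isMinimalSet_closure_orbit_of_forall_orbit_subset_biUnion_smul⟩
  obtain ⟨F, hF⟩ := IsMinimalSet.exists_finset_subset_biUnion_smul hmin isClosed_closure hU
    ⟨p, hpU, subset_closure (mem_orbit_self p)⟩
  exact ⟨F, subset_closure.trans hF⟩
end

section
/- Let $G$ be a group and $\mathcal{H}$ a family of subgroups of $G$ with the following property for a fixed $k \in \mathbb{N}$: for any $H_0, \dots, H_k \in \mathcal{H}$ (i.e. any $k+1$ members, with repetitions allowed) there exists $i \leq k$ such that $\bigcap_{j \leq k} H_j = \bigcap_{j \leq k, j \neq i} H_j$. Then for every finite subfamily $F \subseteq \mathcal{H}$ there is a subfamily $F' \subseteq F$ with $|F'| \leq k$ and $\bigcap_{H \in F} H = \bigcap_{H \in F'} H$. -/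
/-!
If `|F| > k`, some `k + 1` members of `F` contain one that lies above the infimum of the other
`k`, hence above the infimum of the rest of `F`; deleting it from `F` leaves `⨅ F` unchanged, and
induction on `|F|` finishes.
-/

namespace CompleteLattice

variable {α : Type*} [CompleteLattice α]

def RedundantInfs (s : Set α) (k : ℕ) : Prop :=
  ∀ H : Fin (k + 1) → α, (∀ i, H i ∈ s) →
    ∃ i : Fin (k + 1), (⨅ j, H j) = ⨅ j ∈ {j : Fin (k + 1) | j ≠ i}, H j

variable {s : Set α} {k : ℕ}

theorem RedundantInfs.exists_erase_inf_le [DecidableEq α] (hred : RedundantInfs s k)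
    {S : Finset α} (hSs : ↑S ⊆ s) (hS : S.card = k + 1) :
    ∃ a ∈ S, (S.erase a).inf id ≤ a := by
  let e := S.equivFinOfCardEq hS
  let H : Fin (k + 1) → α := fun j => e.symm j
  have hH : Function.Injective H := Subtype.coe_injective.comp e.symm.injective
  obtain ⟨i, hi⟩ := hred H fun j => hSs (e.symm j).2
  refine ⟨H i, (e.symm i).2, ?_⟩
  calc (S.erase (H i)).inf id
      ≤ ⨅ j ∈ {j : Fin (k + 1) | j ≠ i}, H j :=
        le_iInf₂ fun j hj => Finset.inf_le <|
          Finset.mem_erase.mpr ⟨fun h => hj (hH h), (e.symm j).2⟩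
    _ = ⨅ j, H j := hi.symm
    _ ≤ H i := iInf_le H i

theorem RedundantInfs.exists_inf_erase_eq [DecidableEq α] (hred : RedundantInfs s k)
    {F : Finset α} (hFs : ↑F ⊆ s) (hF : k < F.card) :
    ∃ a ∈ F, F.inf id = (F.erase a).inf id := by
  obtain ⟨S, hSF, hS⟩ := Finset.exists_subset_card_eq (Nat.succ_le_of_lt hF)
  obtain ⟨a, haS, ha⟩ :=
    hred.exists_erase_inf_le (subset_trans (Finset.coe_subset.mpr hSF) hFs) hS
  have hle : (F.erase a).inf id ≤ a :=
    (Finset.inf_mono (Finset.erase_subset_erase a hSF)).trans ha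
  refine ⟨a, hSF haS, ?_⟩
  calc F.inf id = a ⊓ (F.erase a).inf id := by
        conv_lhs => rw [← Finset.insert_erase (hSF haS), Finset.inf_insert]
        rfl
    _ = (F.erase a).inf id := inf_eq_right.mpr hle

theorem RedundantInfs.exists_subset_card_le_inf_eq (hred : RedundantInfs s k)
    (F : Finset α) (hFs : ↑F ⊆ s) :
    ∃ F' ⊆ F, F'.card ≤ k ∧ F.inf id = F'.inf id := by
  classical
  induction F using Finset.strongInduction with
  | _ F ih =>
    by_cases hF : F.card ≤ k
    · exact ⟨F, subset_rfl, hF, rfl⟩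
    obtain ⟨a, haF, ha⟩ := hred.exists_inf_erase_eq hFs (not_le.mp hF)
    obtain ⟨F', hF'F, hF'k, hF'⟩ :=
      ih (F.erase a) (Finset.erase_ssubset haF) (subset_trans (by simp) hFs)
    exact ⟨F', hF'F.trans (Finset.erase_subset a F), hF'k, ha.trans hF'⟩

end CompleteLattice

theorem baldwin_saxl_combinatorial {G : Type*} [Group G] (𝓗 : Set (Subgroup G)) (k : ℕ)
    (hred : ∀ H : Fin (k + 1) → Subgroup G, (∀ i, H i ∈ 𝓗) →
      ∃ i : Fin (k + 1), (⨅ j, H j) = ⨅ j ∈ {j : Fin (k + 1) | j ≠ i}, H j) :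
    ∀ F : Finset (Subgroup G), ↑F ⊆ 𝓗 →
      ∃ F' ⊆ F, F'.card ≤ k ∧ F.inf id = F'.inf id :=
  CompleteLattice.RedundantInfs.exists_subset_card_le_inf_eq hred
end

section
/- Let $G$ be a group, $P \leq G$ a subgroup, and $\sim$ an equivalence relation on $P$ with the extension property: whenever $a \sim b$ in $P$ and $c \in P$, there exists $d \in P$ with $c \sim d$ and $ac \sim bd$. Let $X = \{a^{-1} b : a, b \in P,\ a \sim b\}$. Then for every $z \in X$ and $c \in P$, the conjugate $c^{-1} z c$ belongs to $X \cdot X = \{x_1 x_2 : x_1, x_2 \in X\}$. -/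
theorem conj_inv_mul_eq {G : Type*} [Group G] (a b c d : G) :
    c⁻¹ * (a⁻¹ * b) * c = (a * c)⁻¹ * (b * d) * (d⁻¹ * c) := by
  group

theorem conj_mem_sq_general {G : Type*} [Group G] (P : Subgroup G) (r : G → G → Prop)
    (hsymm : ∀ a ∈ P, ∀ b ∈ P, r a b → r b a)
    (hext : ∀ a ∈ P, ∀ b ∈ P, ∀ c ∈ P, r a b → ∃ d ∈ P, r c d ∧ r (a * c) (b * d)) :
    ∀ z ∈ {z : G | ∃ a ∈ P, ∃ b ∈ P, r a b ∧ z = a⁻¹ * b}, ∀ c ∈ P,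
      c⁻¹ * z * c ∈
        {w : G | ∃ x₁ ∈ {z : G | ∃ a ∈ P, ∃ b ∈ P, r a b ∧ z = a⁻¹ * b},
          ∃ x₂ ∈ {z : G | ∃ a ∈ P, ∃ b ∈ P, r a b ∧ z = a⁻¹ * b}, w = x₁ * x₂} := by
  rintro z ⟨a, ha, b, hb, hab, rfl⟩ c hc
  obtain ⟨d, hd, hcd, hacbd⟩ := hext a ha b hb c hc hab
  exact ⟨(a * c)⁻¹ * (b * d), ⟨a * c, mul_mem ha hc, b * d, mul_mem hb hd, hacbd, rfl⟩,
    d⁻¹ * c, ⟨d, hd, c, hc, hsymm c hc d hd hcd, rfl⟩, conj_inv_mul_eq a b c d⟩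

theorem conj_mem_sq {G : Type*} [Group G] (P : Subgroup G) (r : G → G → Prop)
    (hrefl : ∀ a ∈ P, r a a)
    (hsymm : ∀ a ∈ P, ∀ b ∈ P, r a b → r b a)
    (htrans : ∀ a ∈ P, ∀ b ∈ P, ∀ c ∈ P, r a b → r b c → r a c)
    (hext : ∀ a ∈ P, ∀ b ∈ P, ∀ c ∈ P, r a b → ∃ d ∈ P, r c d ∧ r (a * c) (b * d)) :
    ∀ z ∈ {z : G | ∃ a ∈ P, ∃ b ∈ P, r a b ∧ z = a⁻¹ * b}, ∀ c ∈ P,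
      c⁻¹ * z * c ∈
        {w : G | ∃ x₁ ∈ {z : G | ∃ a ∈ P, ∃ b ∈ P, r a b ∧ z = a⁻¹ * b},
          ∃ x₂ ∈ {z : G | ∃ a ∈ P, ∃ b ∈ P, r a b ∧ z = a⁻¹ * b}, w = x₁ * x₂} :=
  conj_mem_sq_general P r hsymm hext
end
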